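/- For all m-bonsais f, g, h set n = deg_ap(g) − 1 and p = deg_ap(h) − 1. Then deg_ap(g ∘_i f) = deg_ap(f) + deg_ap(g) − 1, and for every appending position i of f and every appending position j of g ∘_i f one has: h ∘_j (g ∘_i f) = g ∘_{i+p} (h ∘_j f) whenever 0 ≤ j ≤ i − 1, and h ∘_j (g ∘_i f) = (h ∘_{j−i} g) ∘_i f whenever i ≤ j ≤ i + n. Hence the grafting operations ∘_i make the family of spaces W_n spanned by m-bonsais with n + 1 appending positions into a left pre-Lie system (nonsymmetric pseudo-operad). -/

import Mathlib

/-! Core definitions for (edge-labeled) `m`-bonsais, following Byun,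
"A Generalization of Connes-Kreimer Hopf Algebra".

An `m`-bonsai is a finite rooted tree in which every vertex has at most `m`
children and the edges from a vertex to its children carry pairwise distinct
labels from `{1, …, m}` (here modeled by `Fin m`).  We encode such a tree by
its (finite, prefix-closed) set of vertex-addresses: the address of a vertex
is the list of edge labels on the path from the root to it.  This encoding
builds in both the arity bound and the distinctness of sibling labels. -/

open scoped Classical TensorProduct

structure Bonsai (m : ℕ) where
  verts : Finset (List (Fin m))
  root_mem : ([] : List (Fin m)) ∈ verts
  prefix_closed : ∀ ⦃p q : List (Fin m)⦄, p ∈ verts → q <+: p → q ∈ verts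

namespace Bonsai

variable {m : ℕ}

theorem ext' {T U : Bonsai m} (h : T.verts = U.verts) : T = U := by
  cases T; cases U; simp_all

/-- The one-vertex bonsai. -/
def point (m : ℕ) : Bonsai m where
  verts := {[]}
  root_mem := by simp
  prefix_closed := by
    intro p q hp hq
    simp only [Finset.mem_singleton] at hp ⊢
    subst hp
    exact List.prefix_nil.mp hq

/-- `deg T` is the number of vertices of `T`. -/
def deg (T : Bonsai m) : ℕ := T.verts.card

/-- The subtree of `T` rooted at the vertex (address) `e`. -/
noncomputable def subtreeAt (T : Bonsai m) (e : List (Fin m)) : Bonsai m where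
  verts := insert [] ((T.verts.filter (fun p => e <+: p)).image (fun p => p.drop e.length))
  root_mem := by simp
  prefix_closed := by
    intro p q hp hq
    simp only [Finset.mem_insert, Finset.mem_image, Finset.mem_filter] at hp ⊢
    rcases hp with rfl | ⟨r, ⟨hr, her⟩, rfl⟩
    · left; exact List.prefix_nil.mp hq
    · right
      refine ⟨e ++ q, ⟨T.prefix_closed hr ?_, List.prefix_append e q⟩, by simp⟩
      have : e ++ q <+: e ++ r.drop e.length := (List.prefix_append_right_inj e).mpr hq
      rwa [List.prefix_iff_eq_append.mp her] at this

/-- The set of simple cuts of `T` (including the empty cut).  A simple cut is a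
set of edges (an edge is recorded by the address of its child endpoint, hence a
nonempty vertex address) no two of which lie on a common path to the root. -/
noncomputable def cutsSet (T : Bonsai m) : Finset (Finset (List (Fin m))) :=
  (T.verts.erase []).powerset.filter
    (fun c => ∀ e ∈ c, ∀ e' ∈ c, e <+: e' → e = e')

/-- `R_c(T)`: the trunk (the part containing the root) left after the simple cut `c`. -/
noncomputable def trunk (T : Bonsai m) (c : Finset (List (Fin m))) : Bonsai m where
  verts := insert [] (T.verts.filter (fun p => ∀ e ∈ c, ¬ e <+: p))
  root_mem := by simp
  prefix_closed := by
    intro p q hp hq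
    simp only [Finset.mem_insert, Finset.mem_filter] at hp ⊢
    rcases hp with rfl | ⟨hp, hc⟩
    · left; exact List.prefix_nil.mp hq
    · right
      exact ⟨T.prefix_closed hp hq, fun e he hel => hc e he (hel.trans hq)⟩

/-- `P_c(T)`: the forest (multiset) of branches cut off by the simple cut `c`. -/
noncomputable def branches (T : Bonsai m) (c : Finset (List (Fin m))) :
    Multiset (Bonsai m) := c.val.map T.subtreeAt

end Bonsai

theorem prefix_append_split {α : Type*} (p q r : List α) (h : r <+: p ++ q) :
    r <+: p ∨ ∃ q', q' <+: q ∧ r = p ++ q' := by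
  by_cases hl : r.length ≤ p.length
  · exact Or.inl (List.prefix_of_prefix_length_le h (List.prefix_append p q) hl)
  · right
    have h1 : p <+: r := List.prefix_of_prefix_length_le (List.prefix_append p q) h (by omega)
    obtain ⟨q', rfl⟩ := h1
    exact ⟨q', (List.prefix_append_right_inj p).mp h, rfl⟩

namespace Bonsai

variable {m : ℕ}

/-- The labels `ℓ` admissible at the vertex `v` of `T` (no child edge of `v` is
labeled `ℓ`). -/
noncomputable def admissible (T : Bonsai m) (v : List (Fin m)) : Finset (Fin m) :=
  Finset.univ.filter (fun l => v ++ [l] ∉ T.verts)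

/-- The appending positions of `T`: a pair `(v, ℓ)` of a vertex `v` and a label
`ℓ` admissible at `v`, encoded as the address `v ++ [ℓ]`. -/
noncomputable def positions (T : Bonsai m) : Finset (List (Fin m)) :=
  T.verts.biUnion (fun v => (admissible T v).image (fun l => v ++ [l]))

/-- `deg_ap T`: the number of appending positions of `T`. -/
noncomputable def degAp (T : Bonsai m) : ℕ := (positions T).card

/-- The appending positions of `T` listed in the traversing order
(a depth-first counterclockwise sweep from the root, the free label slots at
each vertex interleaved with the child subtrees according to label order);
for the address encoding this is exactly the lexicographic order. -/
noncomputable def posList (T : Bonsai m) : List (List (Fin m)) :=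
  (positions T).sort (· ≤ ·)

/-- The `i`-th appending position of `T` (`0`-indexed, in traversing order). -/
noncomputable def posAt (T : Bonsai m) (i : ℕ) : List (Fin m) :=
  (posList T).getD i []

/-- Grafting `T1` onto `T2` at the appending position with address `p`. -/
noncomputable def graftPath (T1 T2 : Bonsai m) (p : List (Fin m)) : Bonsai m where
  verts := (T2.verts ∪ p.inits.toFinset) ∪ T1.verts.image (fun q => p ++ q)
  root_mem := by simp [T2.root_mem]
  prefix_closed := by
    intro a b ha hb
    simp only [Finset.mem_union, Finset.mem_image, List.mem_toFinset, List.mem_inits] at ha ⊢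
    rcases ha with (ha | ha) | ⟨r, hr, rfl⟩
    · exact Or.inl (Or.inl (T2.prefix_closed ha hb))
    · exact Or.inl (Or.inr (hb.trans ha))
    · rcases prefix_append_split p r b hb with h | ⟨r', hr', rfl⟩
      · exact Or.inl (Or.inr h)
      · exact Or.inr ⟨r', T1.prefix_closed hr hr', rfl⟩

/-- `T1 ∘ᵢ T2`: the `m`-bonsai obtained by attaching the root of `T1` to `T2`
by a new edge at the `i`-th appending position of `T2`. -/
noncomputable def compAt (T1 : Bonsai m) (i : ℕ) (T2 : Bonsai m) : Bonsai m :=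
  graftPath T1 T2 (posAt T2 i)

end Bonsai


/-! ### Auxiliary lemmas -/

section LexAux

variable {α : Type*} [LinearOrder α]

theorem lex_append_lt : ∀ {p s : List α}, List.Lex (· < ·) p s → ¬ p <+: s →
    ∀ t, List.Lex (· < ·) (p ++ t) s
  | _, _, .nil, hnp, _ => absurd (List.nil_prefix) hnp
  | _, _, .cons h, hnp, t =>
      .cons (lex_append_lt h (fun hq => hnp (List.cons_prefix_cons.mpr ⟨rfl, hq⟩)) t)
  | _, _, .rel h, _, _ => .rel h

theorem list_append_le_append_left {x y : List α} (p : List α) (h : x ≤ y) :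
    p ++ x ≤ p ++ y := by
  rcases h.lt_or_eq with h | rfl
  · exact le_of_lt (List.Lex.append_left _ h p)
  · exact le_rfl

theorem list_toFinset_map {β : Type*} [DecidableEq α] [DecidableEq β] (f : α → β) (l : List α) :
    (l.map f).toFinset = l.toFinset.image f := by
  induction l with
  | nil => simp
  | cons a l ih => simp [ih]

end LexAux

namespace Bonsai

variable {m : ℕ}

theorem mem_positions {T : Bonsai m} {x : List (Fin m)} :
    x ∈ positions T ↔ ∃ v ∈ T.verts, ∃ l : Fin m, x = v ++ [l] ∧ x ∉ T.verts := by
  simp only [positions, Finset.mem_biUnion, admissible, Finset.mem_image, Finset.mem_filter,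
    Finset.mem_univ, true_and]
  constructor
  · rintro ⟨v, hv, l, hl, rfl⟩; exact ⟨v, hv, l, rfl, hl⟩
  · rintro ⟨v, hv, l, rfl, hx⟩; exact ⟨v, hv, l, hx, rfl⟩

theorem pos_not_mem {T : Bonsai m} {x : List (Fin m)} (h : x ∈ positions T) : x ∉ T.verts := by
  obtain ⟨v, hv, l, rfl, hx⟩ := mem_positions.mp h; exact hx

theorem prefix_snoc {v x : List (Fin m)} {l : Fin m} (h : x <+: v ++ [l]) :
    x = v ++ [l] ∨ x <+: v := by
  rcases prefix_append_split v [l] x h with h' | ⟨q, hq, rfl⟩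
  · exact Or.inr h'
  · match q, hq with
    | [], _ => exact Or.inr (by simp)
    | a :: q', hq => 
      obtain ⟨rfl, hq'⟩ := List.cons_prefix_cons.mp hq
      have : q' = [] := List.prefix_nil.mp hq'
      subst this
      exact Or.inl rfl

theorem pos_not_prefix_pos {T : Bonsai m} {x y : List (Fin m)} (hx : x ∈ positions T)
    (hy : y ∈ positions T) (hne : x ≠ y) : ¬ x <+: y := by
  obtain ⟨v, hv, l, rfl, _⟩ := mem_positions.mp hy
  intro hp
  rcases prefix_snoc hp with rfl | hp'
  · exact hne rfl
  · exact pos_not_mem hx (T.prefix_closed hv hp')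

theorem degAp_pos (hm : 0 < m) (T : Bonsai m) : 0 < degAp T := by
  obtain ⟨v, hv, hmax⟩ := Finset.exists_max_image T.verts List.length ⟨[], T.root_mem⟩
  have hnv : v ++ [(⟨0, hm⟩ : Fin m)] ∉ T.verts := by
    intro hc
    have := hmax _ hc
    simp at this
  exact Finset.card_pos.mpr ⟨v ++ [⟨0, hm⟩], mem_positions.mpr ⟨v, hv, _, rfl, hnv⟩⟩

theorem length_posList (T : Bonsai m) : (posList T).length = degAp T :=
  Finset.length_sort _

theorem mem_posList {T : Bonsai m} {x : List (Fin m)} : x ∈ posList T ↔ x ∈ positions T :=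
  Finset.mem_sort _

theorem posAt_eq_getElem (T : Bonsai m) {i : ℕ} (hi : i < degAp T) :
    posAt T i = (posList T)[i]'(by rw [length_posList]; exact hi) :=
  List.getD_eq_getElem _ _ _

theorem posAt_mem {T : Bonsai m} {i : ℕ} (hi : i < degAp T) : posAt T i ∈ positions T := by
  rw [posAt_eq_getElem T hi]
  exact mem_posList.mp (List.getElem_mem _)

theorem mem_verts_graft {T1 T2 : Bonsai m} {p : List (Fin m)} (hp : p ∈ positions T2)
    {x : List (Fin m)} :
    x ∈ (graftPath T1 T2 p).verts ↔ x ∈ T2.verts ∨ ∃ q ∈ T1.verts, x = p ++ q := by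
  obtain ⟨v, hv, l, hpe, hpn⟩ := mem_positions.mp hp
  simp only [graftPath, Finset.mem_union, Finset.mem_image, List.mem_toFinset, List.mem_inits]
  constructor
  · rintro ((hx | hx) | ⟨q, hq, rfl⟩)
    · exact Or.inl hx
    · rcases prefix_snoc (show x <+: v ++ [l] from hpe ▸ hx) with h' | h'
      · exact Or.inr ⟨[], T1.root_mem, by simp [h', hpe]⟩
      · exact Or.inl (T2.prefix_closed hv h')
    · exact Or.inr ⟨q, hq, rfl⟩
  · rintro (hx | ⟨q, hq, rfl⟩)
    · exact Or.inl (Or.inl hx)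
    · exact Or.inr ⟨q, hq, rfl⟩

theorem positions_graft {T1 T2 : Bonsai m} {p : List (Fin m)} (hp : p ∈ positions T2) :
    positions (graftPath T1 T2 p) =
      ((positions T2).erase p) ∪ (positions T1).image (p ++ ·) := by
  have hpG : p ∈ (graftPath T1 T2 p).verts :=
    (mem_verts_graft hp).mpr (Or.inr ⟨[], T1.root_mem, by simp⟩)
  ext x
  simp only [Finset.mem_union, Finset.mem_erase, Finset.mem_image]
  constructor
  · intro hx
    obtain ⟨w, hw, l', rfl, hxn⟩ := mem_positions.mp hx
    rcases (mem_verts_graft hp).mp hw with hw2 | ⟨q, hq, rfl⟩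
    · left
      have hxn2 : w ++ [l'] ∉ T2.verts := fun hc => hxn ((mem_verts_graft hp).mpr (Or.inl hc))
      refine ⟨fun he => hxn (he ▸ hpG), mem_positions.mpr ⟨w, hw2, l', rfl, hxn2⟩⟩
    · right
      have hqn : q ++ [l'] ∉ T1.verts := fun hc =>
        hxn ((mem_verts_graft hp).mpr (Or.inr ⟨q ++ [l'], hc, List.append_assoc p q [l']⟩))
      exact ⟨q ++ [l'], mem_positions.mpr ⟨q, hq, l', rfl, hqn⟩, (List.append_assoc p q [l']).symm⟩
  · rintro (⟨hne, hx⟩ | ⟨y, hy, rfl⟩)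
    · obtain ⟨v', hv', l', rfl, hxn⟩ := mem_positions.mp hx
      refine mem_positions.mpr ⟨v', (mem_verts_graft hp).mpr (Or.inl hv'), l', rfl, ?_⟩
      intro hc
      rcases (mem_verts_graft hp).mp hc with hc2 | ⟨q, hq, he⟩
      · exact hxn hc2
      · exact pos_not_prefix_pos hp hx (fun e => hne e.symm) (he ▸ List.prefix_append p q)
    · obtain ⟨u, hu, l', rfl, hyn⟩ := mem_positions.mp hy
      refine mem_positions.mpr ⟨p ++ u, (mem_verts_graft hp).mpr (Or.inr ⟨u, hu, rfl⟩), l',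
        (List.append_assoc p u [l']).symm, ?_⟩
      intro hc
      rcases (mem_verts_graft hp).mp hc with hc2 | ⟨q, hq, he⟩
      · exact pos_not_mem hp (T2.prefix_closed hc2 (List.prefix_append p _))
      · have : u ++ [l'] = q := List.append_cancel_left he
        exact hyn (this ▸ hq)

theorem graft_disj {T1 T2 : Bonsai m} {p : List (Fin m)} (hp : p ∈ positions T2)
    {y : List (Fin m)} (hy : y ∈ positions T1) : p ++ y ∉ positions T2 := by
  intro hc
  obtain ⟨u, hu, l', rfl, _⟩ := mem_positions.mp hy
  have hne : p ≠ p ++ (u ++ [l']) := by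
    intro he
    have h2 := congrArg List.length he
    simp only [List.length_append, List.length_cons, List.length_nil] at h2
    omega
  exact pos_not_prefix_pos hp hc hne (List.prefix_append p _)

theorem posList_graft (T1 T2 : Bonsai m) {p : List (Fin m)} {A B : List (List (Fin m))}
    (hp : p ∈ positions T2) (hS : posList T2 = A ++ p :: B) :
    posList (graftPath T1 T2 p) = A ++ ((posList T1).map (p ++ ·) ++ B) := by
  classical
  set G := posList T1 with hG
  have hsortS : List.Pairwise (· ≤ ·) (A ++ p :: B) := hS ▸ Finset.pairwise_sort _ _
  have hndS : (A ++ p :: B).Nodup := hS ▸ Finset.sort_nodup _ _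
  have hmemS : ∀ x, x ∈ A ++ p :: B ↔ x ∈ positions T2 := by
    intro x; rw [← hS]; exact mem_posList
  obtain ⟨hsortA, hsortPB, hcrossA⟩ := List.pairwise_append.mp hsortS
  obtain ⟨hpB, hsortB⟩ := List.pairwise_cons.mp hsortPB
  obtain ⟨hndA, hndPB, hdisjA⟩ := List.nodup_append.mp hndS
  obtain ⟨hpnB, hndB⟩ := List.nodup_cons.mp hndPB
  have hApos : ∀ a ∈ A, a ∈ positions T2 := fun a ha =>
    (hmemS a).mp (List.mem_append_left _ ha)
  have hBpos : ∀ b ∈ B, b ∈ positions T2 := fun b hb =>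
    (hmemS b).mp (List.mem_append_right _ (List.mem_cons_of_mem _ hb))
  have hAltp : ∀ a ∈ A, a < p := fun a ha =>
    lt_of_le_of_ne (hcrossA a ha p List.mem_cons_self)
      (fun e => hdisjA a ha p List.mem_cons_self e)
  have hBgtp : ∀ b ∈ B, p < b := fun b hb =>
    lt_of_le_of_ne (hpB b hb) (fun e => hpnB (e ▸ hb))
  have hGpos : ∀ t ∈ G, t ∈ positions T1 := fun t ht => mem_posList.mp ht
  -- cross facts
  have hmapnotpos : ∀ t ∈ G, p ++ t ∉ positions T2 := fun t ht =>
    graft_disj hp (hGpos t ht)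
  have hmaplt : ∀ t ∈ G, ∀ b ∈ B, p ++ t < b := by
    intro t ht b hb
    have hne : p ≠ b := fun e => hpnB (e ▸ hb)
    have h1 : ¬ p <+: b := pos_not_prefix_pos hp (hBpos b hb) hne
    exact lex_append_lt (hBgtp b hb) h1 t
  have hltmap : ∀ a ∈ A, ∀ t : List (Fin m), a < p ++ t := by
    intro a ha t
    exact List.Lex.append_right _ t (hAltp a ha)
  -- sortedness of the candidate
  have hsortL : List.Pairwise (· ≤ ·) (A ++ (G.map (p ++ ·) ++ B)) := by
    rw [List.pairwise_append, List.pairwise_append]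
    refine ⟨hsortA, ⟨?_, hsortB, ?_⟩, ?_⟩
    · exact (Finset.pairwise_sort _ _).map _ (fun a b hab => list_append_le_append_left p hab)
    · rintro x hx b hb
      obtain ⟨t, ht, rfl⟩ := List.mem_map.mp hx
      exact le_of_lt (hmaplt t ht b hb)
    · rintro a ha y hy
      rcases List.mem_append.mp hy with hy | hy
      · obtain ⟨t, ht, rfl⟩ := List.mem_map.mp hy
        exact le_of_lt (hltmap a ha t)
      · exact hcrossA a ha y (List.mem_cons_of_mem _ hy)
  -- nodup of the candidate
  have hndL : (A ++ (G.map (p ++ ·) ++ B)).Nodup := by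
    rw [List.nodup_append, List.nodup_append]
    have hinj : Function.Injective (p ++ ·) := fun x y e => List.append_cancel_left e
    refine ⟨hndA, ⟨(Finset.sort_nodup _ _).map hinj, hndB, ?_⟩, ?_⟩
    · intro x hx y hxB hxy
      subst hxy
      obtain ⟨t, ht, rfl⟩ := List.mem_map.mp hx
      exact hmapnotpos t ht (hBpos _ hxB)
    · intro a ha y hmem hay
      subst hay
      rcases List.mem_append.mp hmem with hy | hy
      · obtain ⟨t, ht, rfl⟩ := List.mem_map.mp hy
        exact hmapnotpos t ht (hApos _ ha)
      · exact hdisjA a ha a (List.mem_cons_of_mem _ hy) rfl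
  -- toFinset of the candidate
  have htF : (A ++ (G.map (p ++ ·) ++ B)).toFinset = positions (graftPath T1 T2 p) := by
    rw [positions_graft hp]
    have hSF : (A ++ p :: B).toFinset = positions T2 := by
      rw [← hS]; exact Finset.sort_toFinset _ _
    ext x
    simp only [List.toFinset_append, Finset.mem_union, List.mem_toFinset, Finset.mem_erase,
      Finset.mem_image, list_toFinset_map, Finset.mem_image, List.mem_toFinset]
    have hxS : x ∈ positions T2 ↔ x ∈ A ∨ x = p ∨ x ∈ B := by
      rw [← hSF]; simp only [List.toFinset_append, Finset.mem_union, List.mem_toFinset, List.mem_cons]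
    constructor
    · rintro (hx | ⟨t, ht, rfl⟩ | hx)
      · exact Or.inl ⟨fun e => hdisjA x hx p List.mem_cons_self e,
          hxS.mpr (Or.inl hx)⟩
      · exact Or.inr ⟨t, mem_posList.mp ht, rfl⟩
      · exact Or.inl ⟨fun e => hpnB (e ▸ hx), hxS.mpr (Or.inr (Or.inr hx))⟩
    · rintro (⟨hne, hx⟩ | ⟨t, ht, rfl⟩)
      · rcases hxS.mp hx with h | h | h
        · exact Or.inl h
        · exact absurd h hne
        · exact Or.inr (Or.inr h)
      · exact Or.inr (Or.inl ⟨t, mem_posList.mpr ht, rfl⟩)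
  refine List.Perm.eq_of_pairwise' (Finset.pairwise_sort _ _) hsortL ?_
  exact List.perm_of_nodup_nodup_toFinset_eq (Finset.sort_nodup _ _) hndL
    ((Finset.sort_toFinset _ _).trans htF.symm)

theorem getD_drop' {α : Type*} (l : List α) (n k : ℕ) (d : α) (h : n + k < l.length) :
    (l.drop n).getD k d = l.getD (n + k) d := by
  rw [List.getD_eq_getElem _ _ (by simp [List.length_drop]; omega), List.getElem_drop,
    List.getD_eq_getElem _ _ h]

theorem getD_take' {α : Type*} (l : List α) (n k : ℕ) (d : α) (h1 : k < n) (h2 : k < l.length) :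
    (l.take n).getD k d = l.getD k d := by
  rw [List.getD_eq_getElem _ _ (by simp [List.length_take]; omega), List.getElem_take,
    List.getD_eq_getElem _ _ h2]

theorem posList_compAt {T1 T2 : Bonsai m} {i : ℕ} (hi : i < degAp T2) :
    posList (compAt T1 i T2) =
      (posList T2).take i ++
        ((posList T1).map (posAt T2 i ++ ·) ++ (posList T2).drop (i + 1)) := by
  have hlen : i < (posList T2).length := by rw [length_posList]; exact hi
  have hsplit : posList T2 = (posList T2).take i ++ posAt T2 i :: (posList T2).drop (i + 1) := by
    conv_lhs => rw [← List.take_append_drop i (posList T2)]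
    rw [List.drop_eq_getElem_cons hlen, posAt_eq_getElem T2 hi]
  exact posList_graft T1 T2 (posAt_mem hi) hsplit

theorem length_take_posList {T2 : Bonsai m} {i : ℕ} (hi : i < degAp T2) :
    ((posList T2).take i).length = i := by
  simp [List.length_take, length_posList]; omega

theorem degAp_compAt (T1 T2 : Bonsai m) {i : ℕ} (hi : i < degAp T2) :
    degAp (compAt T1 i T2) = degAp T2 + degAp T1 - 1 := by
  rw [← length_posList, posList_compAt hi]
  simp only [List.length_append, List.length_take, List.length_map, List.length_drop,
    length_posList]
  omega

theorem posAt_compAt_lt {T1 T2 : Bonsai m} {i j : ℕ} (hi : i < degAp T2) (hj : j < i) :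
    posAt (compAt T1 i T2) j = posAt T2 j := by
  rw [posAt, posList_compAt hi,
    List.getD_append _ _ _ _ (by rw [length_take_posList hi]; omega),
    getD_take' _ _ _ _ hj (by rw [length_posList]; omega)]
  rfl

theorem posAt_compAt_mid {T1 T2 : Bonsai m} {i j : ℕ} (hi : i < degAp T2) (hij : i ≤ j)
    (hj : j - i < degAp T1) :
    posAt (compAt T1 i T2) j = posAt T2 i ++ posAt T1 (j - i) := by
  rw [posAt, posList_compAt hi,
    List.getD_append_right _ _ _ _ (by rw [length_take_posList hi]; omega),
    length_take_posList hi,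
    List.getD_append _ _ _ _ (by simp only [List.length_map, length_posList]; omega),
    List.getD_eq_getElem _ _ (by simp only [List.length_map, length_posList]; omega),
    List.getElem_map, posAt_eq_getElem T1 hj]

theorem posAt_compAt_ge {T1 T2 : Bonsai m} {i j : ℕ} (hi : i < degAp T2)
    (hj : i + degAp T1 ≤ j) (hj2 : j - degAp T1 + 1 < degAp T2) :
    posAt (compAt T1 i T2) j = posAt T2 (j - degAp T1 + 1) := by
  rw [posAt, posList_compAt hi,
    List.getD_append_right _ _ _ _ (by rw [length_take_posList hi]; omega),
    length_take_posList hi,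
    List.getD_append_right _ _ _ _ (by simp only [List.length_map, length_posList]; omega)]
  simp only [List.length_map, length_posList]
  rw [getD_drop' _ _ _ _ (by rw [length_posList]; omega)]
  have e : i + 1 + (j - i - degAp T1) = j - degAp T1 + 1 := by omega
  rw [e, posAt]

theorem graft_comm (T1 T3 T2 : Bonsai m) (p q : List (Fin m)) :
    graftPath T3 (graftPath T1 T2 p) q = graftPath T1 (graftPath T3 T2 q) p := by
  apply ext'
  simp only [graftPath]
  ext x
  simp only [Finset.mem_union, Finset.mem_image, List.mem_toFinset]
  constructor
  · rintro ((((h | h) | h) | h) | h)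
    · exact Or.inl (Or.inl (Or.inl (Or.inl h)))
    · exact Or.inl (Or.inr h)
    · exact Or.inr h
    · exact Or.inl (Or.inl (Or.inl (Or.inr h)))
    · exact Or.inl (Or.inl (Or.inr h))
  · rintro ((((h | h) | h) | h) | h)
    · exact Or.inl (Or.inl (Or.inl (Or.inl h)))
    · exact Or.inl (Or.inr h)
    · exact Or.inr h
    · exact Or.inl (Or.inl (Or.inl (Or.inr h)))
    · exact Or.inl (Or.inl (Or.inr h))

theorem graft_assoc (T3 T1 T2 : Bonsai m) (p r : List (Fin m)) :
    graftPath T3 (graftPath T1 T2 p) (p ++ r) = graftPath (graftPath T3 T1 r) T2 p := by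
  apply ext'
  simp only [graftPath]
  ext x
  simp only [Finset.mem_union, Finset.mem_image, List.mem_toFinset, List.mem_inits]
  constructor
  · rintro ((((h | h) | ⟨s, hs, rfl⟩) | h) | ⟨s, hs, rfl⟩)
    · exact Or.inl (Or.inl h)
    · exact Or.inl (Or.inr h)
    · exact Or.inr ⟨s, Or.inl (Or.inl hs), rfl⟩
    · rcases prefix_append_split p r x h with h' | ⟨r', hr', rfl⟩
      · exact Or.inl (Or.inr h')
      · exact Or.inr ⟨r', Or.inl (Or.inr hr'), rfl⟩
    · exact Or.inr ⟨r ++ s, Or.inr ⟨s, hs, rfl⟩, (List.append_assoc p r s).symm⟩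
  · rintro ((h | h) | ⟨s, ((hs | hs) | ⟨u, hu, rfl⟩), rfl⟩)
    · exact Or.inl (Or.inl (Or.inl (Or.inl h)))
    · exact Or.inl (Or.inl (Or.inl (Or.inr h)))
    · exact Or.inl (Or.inl (Or.inr ⟨s, hs, rfl⟩))
    · exact Or.inl (Or.inr (((List.prefix_append_right_inj p).mpr hs)))
    · exact Or.inr ⟨u, hu, List.append_assoc p r u⟩

end Bonsai

open Bonsai in
/-- **STATEMENT 6.** For all `m`-bonsais `f, g, h`, with `n = deg_ap g − 1` and
`p = deg_ap h − 1`: `deg_ap (g ∘ᵢ f) = deg_ap f + deg_ap g − 1`, and for every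
appending position `i` of `f` and every appending position `j` of `g ∘ᵢ f`,
`h ∘ⱼ (g ∘ᵢ f) = g ∘_{i+p} (h ∘ⱼ f)` whenever `0 ≤ j ≤ i − 1`, and
`h ∘ⱼ (g ∘ᵢ f) = (h ∘_{j−i} g) ∘ᵢ f` whenever `i ≤ j ≤ i + n`.  Hence the
grafting operations `∘ᵢ` make the spaces spanned by `m`-bonsais with a fixed
number of appending positions into a left pre-Lie system (nonsymmetric
pseudo-operad). -/
theorem bonsai_preLie_system (m : ℕ) (f g h : Bonsai m) :
    ∀ i : ℕ, i < degAp f →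
      degAp (compAt g i f) = degAp f + degAp g - 1 ∧
      ∀ j : ℕ, j < degAp (compAt g i f) →
        (j < i →
          compAt h j (compAt g i f) = compAt g (i + (degAp h - 1)) (compAt h j f)) ∧
        (i ≤ j → j ≤ i + (degAp g - 1) →
          compAt h j (compAt g i f) = compAt (compAt h (j - i) g) i f) := by
  intro i hi
  have hm : 0 < m := by
    obtain ⟨x, hx⟩ : (positions f).Nonempty :=
      Finset.card_pos.mp (lt_of_le_of_lt (Nat.zero_le i) hi)
    obtain ⟨v, hv, l, rfl, h2⟩ := mem_positions.mp hx
    exact l.pos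
  have hg1 : 0 < degAp g := degAp_pos hm g
  have hh1 : 0 < degAp h := degAp_pos hm h
  refine ⟨degAp_compAt g f hi, ?_⟩
  intro j hj
  constructor
  · intro hji
    have hjf : j < degAp f := lt_trans hji hi
    have e1 : posAt (compAt g i f) j = posAt f j := posAt_compAt_lt hi hji
    have e2 : posAt (compAt h j f) (i + (degAp h - 1)) = posAt f i := by
      rw [posAt_compAt_ge hjf (by omega) (by omega)]
      congr 1
      omega
    simp only [compAt] at e1 e2 ⊢
    rw [e1, e2]
    exact graft_comm g h f (posAt f i) (posAt f j)
  · intro hij hji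
    have e1 : posAt (compAt g i f) j = posAt f i ++ posAt g (j - i) :=
      posAt_compAt_mid hi hij (by omega)
    simp only [compAt] at e1 ⊢
    rw [e1]
    exact graft_assoc h g f (posAt f i) (posAt g (j - i))
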